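/- Let u, v ∈ ℝ^{d_in} be fixed vectors, let W ∈ ℝ^{d_out × d_in} have independent entries W_{k,l} ~ N(0, 1/d_out), and let b ∈ ℝ^{d_out} have independent entries b_k ~ N(0, 1/d_out), with W and b independent. Then E[φ(Wu + b)ᵀ φ(Wv + b)] ≥ (1 + ⟨u,v⟩)/2. -/

import Mathlib

open MeasureTheory ProbabilityTheory Real Matrix NNReal

noncomputable section

/-!
Write `x = W u + b` and `y = W v + b`. Coordinatewise `x y ≤ φ(x) φ(y) + φ(-x) φ(-y)`. The
entries of `(W, b)` are independent centred Gaussians, so `(W, b)` and `(-W, -b)` have the same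
law and the two terms on the right have the same expectation. On the left, `x` and `y` are linear
in the independent entries, whence `E[x_k y_k] = (⟨u, v⟩ + 1) / d_out`.
-/

def reluV {n : ℕ} (x : Fin n → ℝ) : Fin n → ℝ := fun i => max (x i) 0

lemma dotProduct_le_reluV_add_reluV_neg {n : ℕ} (x y : Fin n → ℝ) :
    x ⬝ᵥ y ≤ reluV x ⬝ᵥ reluV y + reluV (-x) ⬝ᵥ reluV (-y) := by
  simp only [dotProduct, reluV, Pi.neg_apply, ← Finset.sum_add_distrib]
  refine Finset.sum_le_sum fun k _ => ?_
  rcases le_total (x k) 0 with hx | hx <;> rcases le_total (y k) 0 with hy | hy <;>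
    simp [hx, hy] <;> nlinarith

@[fun_prop]
lemma continuous_reluV {n : ℕ} : Continuous (reluV (n := n)) :=
  continuous_pi fun k => (continuous_apply k).max continuous_const

section Moments

variable {Ω : Type*} [MeasurableSpace Ω] {μ : Measure Ω}

lemma ProbabilityTheory.HasLaw.memLp_two_of_gaussianReal {X : Ω → ℝ} {m : ℝ} {v : ℝ≥0}
    (hX : HasLaw X (gaussianReal m v) μ) : MemLp X 2 μ :=
  (hX.map_eq ▸ memLp_id_gaussianReal 2).comp_of_map hX.aemeasurable

lemma ProbabilityTheory.HasLaw.map_neg_eq_of_gaussianReal {X : Ω → ℝ} {v : ℝ≥0}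
    (hX : HasLaw X (gaussianReal 0 v) μ) : μ.map (fun ω => -X ω) = μ.map X := by
  have h := (gaussianReal_neg hX).map_eq
  rw [neg_zero] at h
  exact h.trans hX.map_eq.symm

variable {ι : Type*} [Fintype ι] {X : ι → Ω → ℝ}

lemma covariance_sum_mul_sum_of_pairwise_indepFun [IsFiniteMeasure μ]
    (hX : ∀ i, MemLp (X i) 2 μ) (hind : Pairwise fun i j => X i ⟂ᵢ[μ] X j) (c d : ι → ℝ) :
    cov[fun ω => ∑ i, c i * X i ω, fun ω => ∑ i, d i * X i ω; μ]
      = ∑ i, c i * d i * Var[X i; μ] := by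
  rw [covariance_fun_sum_fun_sum (fun i => (hX i).const_mul (c i))
    (fun i => (hX i).const_mul (d i))]
  refine Finset.sum_congr rfl fun i _ => ?_
  simp_rw [covariance_const_mul_left, covariance_const_mul_right]
  rw [Finset.sum_eq_single i
      (fun j _ hji => by rw [(hind hji.symm).covariance_eq_zero (hX i) (hX j), mul_zero, mul_zero])
      (by simp), covariance_self (hX i).aemeasurable]
  ring

lemma integral_mulVec_dotProduct_mulVec [IsProbabilityMeasure μ] (hX : ∀ i, MemLp (X i) 2 μ)
    (hmean : ∀ i, μ[X i] = 0) (hind : Pairwise fun i j => X i ⟂ᵢ[μ] X j)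
    {κ : Type*} [Fintype κ] (A B : Matrix κ ι ℝ) :
    ∫ ω, (A *ᵥ fun i => X i ω) ⬝ᵥ (B *ᵥ fun i => X i ω) ∂μ
      = ∑ k, ∑ i, A k i * B k i * Var[X i; μ] := by
  have hmemLp (c : ι → ℝ) : MemLp (fun ω => ∑ i, c i * X i ω) 2 μ :=
    memLp_finsetSum _ fun i _ => (hX i).const_mul (c i)
  have hcentered (c : ι → ℝ) : μ[fun ω => ∑ i, c i * X i ω] = 0 := by
    rw [integral_finsetSum _ fun i _ => ((hX i).integrable one_le_two).const_mul (c i)]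
    simp [integral_const_mul, hmean]
  simp only [dotProduct, mulVec]
  rw [integral_finsetSum _ fun k _ => ?integrable]
  case integrable => exact (hmemLp (A k)).integrable_mul (hmemLp (B k))
  refine Finset.sum_congr rfl fun k _ => ?_
  have h := covariance_eq_sub (hmemLp (A k)) (hmemLp (B k))
  rw [hcentered, hcentered, mul_zero, sub_zero,
    covariance_sum_mul_sum_of_pairwise_indepFun hX hind] at h
  exact h.symm

lemma ProbabilityTheory.iIndepFun.integral_comp_neg {E : Type*} [NormedAddCommGroup E]
    [NormedSpace ℝ E]
    (hX : ∀ i, AEMeasurable (X i) μ) (hsymm : ∀ i, μ.map (fun ω => -X i ω) = μ.map (X i))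
    (hind : iIndepFun X μ) {Φ : (ι → ℝ) → E} (hΦ : StronglyMeasurable Φ) :
    ∫ ω, Φ (fun i => -X i ω) ∂μ = ∫ ω, Φ (fun i => X i ω) ∂μ := by
  have hneg : iIndepFun (fun i ω => -X i ω) μ := hind.comp (fun _ x => -x) fun _ => measurable_neg
  have hlaw : μ.map (fun ω i => -X i ω) = μ.map (fun ω i => X i ω) := by
    rw [hneg.map_fun_eq_pi_map fun i => (hX i).fun_neg, hind.map_fun_eq_pi_map hX]
    simp_rw [hsymm]
  rw [← integral_map (aemeasurable_pi_lambda _ fun i => (hX i).fun_neg) hΦ.aestronglyMeasurable,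
    hlaw, integral_map (aemeasurable_pi_lambda _ hX) hΦ.aestronglyMeasurable]

lemma integrable_dotProduct_of_memLp {κ : Type*} [Fintype κ] {x y : Ω → κ → ℝ}
    (hx : ∀ k, MemLp (fun ω => x ω k) 2 μ) (hy : ∀ k, MemLp (fun ω => y ω k) 2 μ) :
    Integrable (fun ω => x ω ⬝ᵥ y ω) μ :=
  integrable_finsetSum _ fun k _ => (hx k).integrable_mul (hy k)

lemma integral_mulVec_dotProduct_mulVec_le_two_mul_integral_reluV [IsProbabilityMeasure μ]
    (hX : ∀ i, MemLp (X i) 2 μ) (hsymm : ∀ i, μ.map (fun ω => -X i ω) = μ.map (X i))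
    (hind : iIndepFun X μ) {m : ℕ} (A B : Matrix (Fin m) ι ℝ) :
    ∫ ω, (A *ᵥ fun i => X i ω) ⬝ᵥ (B *ᵥ fun i => X i ω) ∂μ
      ≤ 2 * ∫ ω, reluV (A *ᵥ fun i => X i ω) ⬝ᵥ reluV (B *ᵥ fun i => X i ω) ∂μ := by
  have hpre (A : Matrix (Fin m) ι ℝ) (k : Fin m) :
      MemLp (fun ω => (A *ᵥ fun i => X i ω) k) 2 μ :=
    memLp_finsetSum _ fun i _ => (hX i).const_mul (A k i)
  have hrelu {x : Ω → Fin m → ℝ} (hx : ∀ k, MemLp (fun ω => x ω k) 2 μ) (k : Fin m) :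
      MemLp (fun ω => reluV (x ω) k) 2 μ :=
    (hx k).sup (memLp_const 0)
  set Φ : (ι → ℝ) → ℝ := fun x => reluV (A *ᵥ x) ⬝ᵥ reluV (B *ᵥ x)
  have hΦ : Continuous Φ := by fun_prop
  have hΦ_pos : Integrable (fun ω => Φ fun i => X i ω) μ :=
    integrable_dotProduct_of_memLp (hrelu (hpre A)) (hrelu (hpre B))
  have hΦ_neg_eq (ω : Ω) : Φ (fun i => -X i ω)
      = reluV (-(A *ᵥ fun i => X i ω)) ⬝ᵥ reluV (-(B *ᵥ fun i => X i ω)) := by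
    rw [← mulVec_neg, ← mulVec_neg]
    rfl
  have hΦ_neg : Integrable (fun ω => Φ fun i => -X i ω) μ := by
    simp_rw [hΦ_neg_eq]
    exact integrable_dotProduct_of_memLp (hrelu fun k => (hpre A k).neg)
      (hrelu fun k => (hpre B k).neg)
  calc ∫ ω, (A *ᵥ fun i => X i ω) ⬝ᵥ (B *ᵥ fun i => X i ω) ∂μ
      ≤ ∫ ω, Φ (fun i => X i ω) + Φ (fun i => -X i ω) ∂μ := by
        refine integral_mono (integrable_dotProduct_of_memLp (hpre A) (hpre B))
          (hΦ_pos.add hΦ_neg) fun ω => ?_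
        rw [hΦ_neg_eq]
        exact dotProduct_le_reluV_add_reluV_neg _ _
    _ = 2 * ∫ ω, Φ (fun i => X i ω) ∂μ := by
        rw [integral_add hΦ_pos hΦ_neg,
          hind.integral_comp_neg (fun i => (hX i).aemeasurable) hsymm hΦ.stronglyMeasurable]
        ring

end Moments

def layerMatrix {m n : ℕ} (u : Fin n → ℝ) : Matrix (Fin m) ((Fin m × Fin n) ⊕ Fin m) ℝ :=
  Matrix.of fun k =>
    Sum.elim (fun p => if p.1 = k then u p.2 else 0) (fun j => if j = k then 1 else 0)

lemma layerMatrix_mulVec {m n : ℕ} (M : Matrix (Fin m) (Fin n) ℝ) (β : Fin m → ℝ)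
    (u : Fin n → ℝ) :
    layerMatrix u *ᵥ Sum.elim (fun p => M p.1 p.2) β = M *ᵥ u + β := by
  ext k
  simp [layerMatrix, mulVec, dotProduct, Fintype.sum_sum_type, Fintype.sum_prod_type, mul_comm]

lemma sum_layerMatrix_mul_layerMatrix {m n : ℕ} (u v : Fin n → ℝ) (k : Fin m) :
    ∑ i, layerMatrix u k i * layerMatrix v k i = 1 + u ⬝ᵥ v := by
  simp [add_comm, layerMatrix, dotProduct, Fintype.sum_sum_type, Fintype.sum_prod_type, ite_mul]

/-- Let `u, v ∈ ℝ^{d_in}` be fixed, let `W ∈ ℝ^{d_out × d_in}` have jointly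
independent entries `W_{k,l} ~ N(0, 1/d_out)` and `b ∈ ℝ^{d_out}` independent entries
`b_k ~ N(0, 1/d_out)`, with `W` and `b` independent. Then
`E[φ(Wu + b)ᵀ φ(Wv + b)] ≥ (1 + ⟨u,v⟩)/2`. -/
theorem statement10
    {Ω : Type*} [MeasurableSpace Ω] (μ : Measure Ω) [IsProbabilityMeasure μ]
    (d_in d_out : ℕ) (hdout : 0 < d_out)
    (W : Ω → Matrix (Fin d_out) (Fin d_in) ℝ) (b : Ω → Fin d_out → ℝ)
    (hWmeas : ∀ k l, Measurable fun ω => W ω k l)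
    (hbmeas : ∀ k, Measurable fun ω => b ω k)
    (hWlaw : ∀ k l, Measure.map (fun ω => W ω k l) μ = gaussianReal 0 (d_out : ℝ≥0)⁻¹)
    (hblaw : ∀ k, Measure.map (fun ω => b ω k) μ = gaussianReal 0 (d_out : ℝ≥0)⁻¹)
    (hindep : iIndepFun
      (Sum.elim (fun (kl : Fin d_out × Fin d_in) (ω : Ω) => W ω kl.1 kl.2)
        (fun (k : Fin d_out) (ω : Ω) => b ω k)) μ)
    (u v : Fin d_in → ℝ) :
    (1 + u ⬝ᵥ v) / 2 ≤ ∫ ω, reluV ((W ω).mulVec u + b ω) ⬝ᵥ reluV ((W ω).mulVec v + b ω) ∂μ := by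
  set X := Sum.elim (fun (kl : Fin d_out × Fin d_in) (ω : Ω) => W ω kl.1 kl.2)
    (fun (k : Fin d_out) (ω : Ω) => b ω k)
  have hlaw : ∀ i, HasLaw (X i) (gaussianReal 0 (d_out : ℝ≥0)⁻¹) μ := by
    rintro (⟨k, l⟩ | k)
    exacts [⟨(hWmeas k l).aemeasurable, hWlaw k l⟩, ⟨(hbmeas k).aemeasurable, hblaw k⟩]
  have hmemLp i := (hlaw i).memLp_two_of_gaussianReal
  have hpreact (w : Fin d_in → ℝ) ω : layerMatrix w *ᵥ (fun i => X i ω) = W ω *ᵥ w + b ω := by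
    rw [← layerMatrix_mulVec]
    congr 1
    ext (_ | _) <;> rfl
  have hsecond : ∫ ω, (W ω *ᵥ u + b ω) ⬝ᵥ (W ω *ᵥ v + b ω) ∂μ = 1 + u ⬝ᵥ v := by
    simp_rw [← hpreact]
    rw [integral_mulVec_dotProduct_mulVec hmemLp
      (fun i => by rw [(hlaw i).integral_eq, integral_id_gaussianReal])
      (fun i j hij => hindep.indepFun hij)]
    simp_rw [(hlaw _).variance_eq, variance_id_gaussianReal, ← Finset.sum_mul,
      sum_layerMatrix_mul_layerMatrix]
    rw [Finset.sum_const, Finset.card_univ, Fintype.card_fin, nsmul_eq_mul, NNReal.coe_inv,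
      NNReal.coe_natCast]
    field_simp
  have hrelu := integral_mulVec_dotProduct_mulVec_le_two_mul_integral_reluV hmemLp
    (fun i => (hlaw i).map_neg_eq_of_gaussianReal) hindep (layerMatrix u) (layerMatrix v)
  simp_rw [hpreact] at hrelu
  linarith
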